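/- arXiv:1008.2738 — 2 statements merged into one kernel-verified Lean document; each statement's English description precedes it below -/
import Mathlib

section
/- The improper integral ∫_0^∞ Φ_1(2,t) · t^2 dt, where Φ_1(2,t) = 16 t^3 (5 t^4 - 3)/(1 + t^4)^3, converges and equals 6π. -/
open MeasureTheory Real

/-- Φ_1(2,t) = 16 t³ (5t⁴ - 3)/(1 + t⁴)³. -/
noncomputable def Phi12 (t : ℝ) : ℝ := 16 * t ^ 3 * (5 * t ^ 4 - 3) / (1 + t ^ 4) ^ 3

/-!
Multiplying out, `Φ_1(2,t) t² = 80 t⁹/(1+t⁴)³ - 48 t⁵/(1+t⁴)³`, and both terms are nonnegative on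
`(0, ∞)`. Each has a primitive of the form `c·arctan(t²) + (a t⁶ + b t²)/(1+t⁴)²`, which vanishes at
`0` and tends to `c·π/2` at infinity; this gives integrability and the values `3π/32` and `π/32`,
whence `80·3π/32 - 48·π/32 = 6π`.
-/

open Filter Topology Set

noncomputable def arctanSqPrimitive (a b c x : ℝ) : ℝ :=
  c * arctan (x ^ 2) + (a * x ^ 6 + b * x ^ 2) / (1 + x ^ 4) ^ 2

lemma hasDerivAt_arctanSqPrimitive (a b c x : ℝ) :
    HasDerivAt (arctanSqPrimitive a b c)
      (((2 * c - 2 * a) * x ^ 9 + (4 * c + 6 * a - 6 * b) * x ^ 5 + (2 * c + 2 * b) * x) /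
        (1 + x ^ 4) ^ 3) x := by
  have h := ((hasDerivAt_pow 2 x).arctan.const_mul c).add
    ((((hasDerivAt_pow 6 x).const_mul a).add ((hasDerivAt_pow 2 x).const_mul b)).div
      (((hasDerivAt_pow 4 x).const_add 1).pow 2) (by simp only [Pi.pow_apply]; positivity))
  refine h.congr_deriv ?_
  have hpos : (0 : ℝ) < 1 + x ^ 4 := by positivity
  simp only [Pi.add_apply, Pi.pow_apply]
  field_simp
  ring

lemma continuous_arctanSqPrimitive (a b c : ℝ) : Continuous (arctanSqPrimitive a b c) :=
  continuous_iff_continuousAt.2 fun x => (hasDerivAt_arctanSqPrimitive a b c x).continuousAt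

@[simp]
lemma arctanSqPrimitive_zero (a b c : ℝ) : arctanSqPrimitive a b c 0 = 0 := by
  simp [arctanSqPrimitive]

lemma tendsto_arctanSqPrimitive_atTop (a b c : ℝ) :
    Tendsto (arctanSqPrimitive a b c) atTop (𝓝 (c * (π / 2))) := by
  have harctan : Tendsto (fun x : ℝ => arctan (x ^ 2)) atTop (𝓝 (π / 2)) :=
    (tendsto_arctan_atTop.mono_right nhdsWithin_le_nhds).comp (tendsto_pow_atTop two_ne_zero)
  -- dividing numerator and denominator by `x⁸` exhibits the rational part as a function of `x⁻¹`
  have hrat : Tendsto (fun x : ℝ => (a * x ^ 6 + b * x ^ 2) / (1 + x ^ 4) ^ 2) atTop (𝓝 0) := by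
    have hinv := tendsto_inv_atTop_zero (𝕜 := ℝ)
    have h : Tendsto (fun x : ℝ => (a * x⁻¹ ^ 2 + b * x⁻¹ ^ 6) / (x⁻¹ ^ 4 + 1) ^ 2) atTop
        (𝓝 ((a * 0 ^ 2 + b * 0 ^ 6) / (0 ^ 4 + 1) ^ 2)) :=
      (((hinv.pow 2).const_mul a).add ((hinv.pow 6).const_mul b)).div
        (((hinv.pow 4).add_const 1).pow 2) (by norm_num)
    rw [show (a * 0 ^ 2 + b * 0 ^ 6) / (0 ^ 4 + 1) ^ 2 = (0 : ℝ) by norm_num] at h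
    refine h.congr' ?_
    filter_upwards [eventually_ne_atTop 0] with x hx
    field_simp
  rw [← add_zero (c * (π / 2))]
  exact (harctan.const_mul c).add hrat

lemma integrableOn_Ioi_and_integral_eq_of_hasDerivAt_of_nonneg {f f' : ℝ → ℝ} {a l : ℝ}
    (hcont : ContinuousWithinAt f (Ici a) a) (hderiv : ∀ x ∈ Ioi a, HasDerivAt f (f' x) x)
    (hf' : ∀ x ∈ Ioi a, 0 ≤ f' x) (hf : Tendsto f atTop (𝓝 l)) :
    IntegrableOn f' (Ioi a) ∧ ∫ x in Ioi a, f' x = l - f a :=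
  ⟨integrableOn_Ioi_deriv_of_nonneg hcont hderiv hf' hf,
    integral_Ioi_of_hasDerivAt_of_nonneg hcont hderiv hf' hf⟩

lemma integrableOn_and_integral_Ioi_pow_nine_div_one_add_pow_four_cube :
    IntegrableOn (fun x : ℝ => x ^ 9 / (1 + x ^ 4) ^ 3) (Ioi 0) ∧
      ∫ x in Ioi (0 : ℝ), x ^ 9 / (1 + x ^ 4) ^ 3 = 3 * π / 32 := by
  have h := integrableOn_Ioi_and_integral_eq_of_hasDerivAt_of_nonneg
    (f' := fun x => x ^ 9 / (1 + x ^ 4) ^ 3)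
    (continuous_arctanSqPrimitive (-5 / 16) (-3 / 16) (3 / 16)).continuousWithinAt
    (fun x _ => (hasDerivAt_arctanSqPrimitive _ _ _ x).congr_deriv (by ring))
    (fun x (hx : 0 < x) => by positivity) (tendsto_arctanSqPrimitive_atTop _ _ _)
  exact ⟨h.1, by rw [h.2, arctanSqPrimitive_zero]; ring⟩

lemma integrableOn_and_integral_Ioi_pow_five_div_one_add_pow_four_cube :
    IntegrableOn (fun x : ℝ => x ^ 5 / (1 + x ^ 4) ^ 3) (Ioi 0) ∧
      ∫ x in Ioi (0 : ℝ), x ^ 5 / (1 + x ^ 4) ^ 3 = π / 32 := by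
  have h := integrableOn_Ioi_and_integral_eq_of_hasDerivAt_of_nonneg
    (f' := fun x => x ^ 5 / (1 + x ^ 4) ^ 3)
    (continuous_arctanSqPrimitive (1 / 16) (-1 / 16) (1 / 16)).continuousWithinAt
    (fun x _ => (hasDerivAt_arctanSqPrimitive _ _ _ x).congr_deriv (by ring))
    (fun x (hx : 0 < x) => by positivity) (tendsto_arctanSqPrimitive_atTop _ _ _)
  exact ⟨h.1, by rw [h.2, arctanSqPrimitive_zero]; ring⟩

theorem Phi12_integral :
    IntegrableOn (fun t => Phi12 t * t ^ 2) (Set.Ioi (0:ℝ)) ∧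
    (∫ t in Set.Ioi (0:ℝ), Phi12 t * t ^ 2) = 6 * π := by
  obtain ⟨hi9, he9⟩ := integrableOn_and_integral_Ioi_pow_nine_div_one_add_pow_four_cube
  obtain ⟨hi5, he5⟩ := integrableOn_and_integral_Ioi_pow_five_div_one_add_pow_four_cube
  have hsplit : (fun t => Phi12 t * t ^ 2) =
      fun t => 80 * (t ^ 9 / (1 + t ^ 4) ^ 3) - 48 * (t ^ 5 / (1 + t ^ 4) ^ 3) := by
    ext t; simp only [Phi12]; ring
  rw [hsplit]
  refine ⟨(hi9.const_mul 80).sub (hi5.const_mul 48), ?_⟩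
  rw [integral_sub (hi9.const_mul 80) (hi5.const_mul 48), integral_const_mul, integral_const_mul,
    he9, he5]
  ring
end

section
/- There exists a continuous function q : (0,∞) → ℝ with q(t) ≥ 0 for all t > 0 such that ∫_0^1 (∫_x^1 (1-y)/y dy) q(t·x) dx ≤ t for all t > 0, yet ∫_0^∞ q(t) ln(1 + t^{-4}) dt > 6π. In other words, Khabibullin's conjecture fails for n = 2, α = 2. -/
/-!
For `q₀ t = 12 t` the hypothesis holds with equality, because
`∫₀¹ x (x - 1 - log x) dx = 1/12` and `∫ₓ¹ (1 - y)/y dy = x - 1 - log x`, and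
`∫₀^∞ q₀ t log (1 + t⁻⁴) dt = 6π`. We subtract `12 t P (t / t₀)` on `(0, t₀]`, where the quartic
`P` satisfies `|P| ≤ 1` on `[0, 1]` and is orthogonal on `[0, 1]` to `σ`, `σ²` and `σ log σ`.
By scaling, this orthogonality makes the perturbation invisible to the hypothesis for `t ≥ t₀`,
while for `t ≤ t₀` it lowers the left-hand side by `t (1 - t/t₀)⁴`. In the final integral,
`log (1 + t⁻⁴) = log (1 + t⁴) - 4 log t`, the `log t` part is killed by orthogonality, and seven
terms of the series of `log (1 + t⁴)` show `∫₀^t₀ t P (t/t₀) log (1 + t⁴) dt < 0` when `t₀⁴ = 3/5`.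
-/

open MeasureTheory intervalIntegral Real Set
open Filter Topology

namespace Khabibullin

lemma continuous_pow_mul_mul_log (j : ℕ) : Continuous fun x : ℝ => x ^ j * (x * log x) :=
  (continuous_pow j).mul continuous_mul_log

lemma integral_pow_mul_mul_log (j : ℕ) {c : ℝ} (hc : 0 ≤ c) :
    ∫ x in 0..c, x ^ j * (x * log x)
      = c ^ (j + 2) * log c / (j + 2) - c ^ (j + 2) / ((j : ℝ) + 2) ^ 2 := by
  have hF : Continuous fun x : ℝ =>
      x ^ (j + 1) * (x * log x) / (j + 2) - x ^ (j + 2) / ((j : ℝ) + 2) ^ 2 := by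
    fun_prop (disch := exact continuous_mul_log)
  rw [integral_eq_sub_of_hasDerivAt_of_le hc hF.continuousOn
    (fun x hx => ?_) ((continuous_pow_mul_mul_log j).intervalIntegrable _ _)]
  · rw [zero_pow (Nat.succ_ne_zero _), zero_pow (Nat.succ_ne_zero _)]
    ring
  · refine ((((hasDerivAt_pow (j + 1) x).mul (hasDerivAt_mul_log hx.1.ne')).div_const
      ((j : ℝ) + 2)).sub ((hasDerivAt_pow (j + 2) x).div_const (((j : ℝ) + 2) ^ 2))).congr_deriv ?_
    push_cast
    field_simp
    ring

lemma continuous_mul_kernel : Continuous fun x : ℝ => x * (x - 1 - log x) := by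
  have h : (fun x : ℝ => x * (x - 1 - log x)) = fun x => x * x - x - x * log x := by
    ext x; ring
  rw [h]
  exact ((continuous_id.mul continuous_id).sub continuous_id).sub continuous_mul_log

lemma integral_one_sub_div_self {x : ℝ} (hx : 0 < x) :
    ∫ y in x..1, (1 - y) / y = x - 1 - log x := by
  have h : EqOn (fun y : ℝ => (1 - y) / y) (fun y => y⁻¹ - 1) (uIcc x 1) := by
    intro y hy
    have : y ≠ 0 := (lt_of_lt_of_le (lt_min hx one_pos) hy.1).ne'
    field_simp
  have hinv : IntervalIntegrable (fun y : ℝ => y⁻¹) volume x 1 :=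
    intervalIntegral.intervalIntegrable_inv
      (fun y hy => (lt_of_lt_of_le (lt_min hx one_pos) hy.1).ne') continuousOn_id
  rw [integral_congr h, integral_sub hinv intervalIntegrable_const, integral_inv_of_pos hx one_pos,
    intervalIntegral.integral_const, one_div, log_inv, smul_eq_mul, mul_one]
  ring

lemma integral_pow_mul_kernel (j : ℕ) {c : ℝ} (hc : 0 ≤ c) :
    ∫ x in 0..c, x ^ j * (x * (x - 1 - log x))
      = c ^ (j + 3) / (j + 3) - c ^ (j + 2) / (j + 2)
        - (c ^ (j + 2) * log c / (j + 2) - c ^ (j + 2) / ((j : ℝ) + 2) ^ 2) := by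
  have h : (fun x : ℝ => x ^ j * (x * (x - 1 - log x)))
      = fun x => (x ^ (j + 2) - x ^ (j + 1)) - x ^ j * (x * log x) := by
    ext x; ring
  rw [h, integral_sub (intervalIntegrable_pow _ |>.sub (intervalIntegrable_pow _))
      ((continuous_pow_mul_mul_log j).intervalIntegrable _ _),
    integral_sub (intervalIntegrable_pow _) (intervalIntegrable_pow _), integral_pow, integral_pow,
    integral_pow_mul_mul_log j hc, zero_pow (Nat.succ_ne_zero _), zero_pow (Nat.succ_ne_zero _)]
  push_cast
  ring

lemma log_one_add_inv_pow_four {t : ℝ} (ht : 0 < t) :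
    log (1 + 1 / t ^ 4) = log (1 + t ^ 4) - 4 * log t := by
  rw [show 1 + 1 / t ^ 4 = (1 + t ^ 4) / t ^ 4 by field_simp; ring, log_div (by positivity)
    (by positivity), log_pow]
  push_cast
  ring

@[fun_prop]
lemma continuous_log_one_add_pow_four : Continuous fun t : ℝ => log (1 + t ^ 4) := by
  fun_prop (disch := intro t; positivity)

noncomputable def antiderivLog (t : ℝ) : ℝ :=
  t ^ 2 / 2 * log (1 + t ^ 4) - 2 * (t * (t * log t)) + arctan (t ^ 2)

lemma continuous_antiderivLog : Continuous antiderivLog := by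
  unfold antiderivLog
  fun_prop (disch := exact continuous_mul_log)

lemma hasDerivAt_antiderivLog {x : ℝ} (hx : 0 < x) :
    HasDerivAt antiderivLog (x * log (1 + 1 / x ^ 4)) x := by
  have hlog : HasDerivAt (fun t : ℝ => log (1 + t ^ 4)) (4 * x ^ 3 / (1 + x ^ 4)) x := by
    convert ((hasDerivAt_pow 4 x).const_add 1).log (by positivity) using 1
    norm_num
  refine ((((hasDerivAt_pow 2 x).div_const 2).mul hlog).sub
    (((hasDerivAt_id' x).mul (hasDerivAt_mul_log hx.ne')).const_mul 2)
    |>.add (hasDerivAt_pow 2 x).arctan).congr_deriv ?_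
  rw [log_one_add_inv_pow_four hx]
  have : (1 : ℝ) + (x ^ 2) ^ 2 ≠ 0 := by positivity
  push_cast
  field_simp
  ring

lemma tendsto_antiderivLog_atTop : Tendsto antiderivLog atTop (𝓝 (π / 2)) := by
  have hlog : Tendsto (fun t : ℝ => t ^ 2 / 2 * log (1 + 1 / t ^ 4)) atTop (𝓝 0) := by
    have hsq : Tendsto (fun t : ℝ => 1 / (2 * t ^ 2)) atTop (𝓝 0) :=
      tendsto_const_nhds.div_atTop
        (Tendsto.const_mul_atTop two_pos (tendsto_pow_atTop two_ne_zero))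
    refine tendsto_of_tendsto_of_tendsto_of_le_of_le' tendsto_const_nhds hsq ?_ ?_
    · filter_upwards [eventually_gt_atTop 0] with t ht
      exact mul_nonneg (by positivity) (log_nonneg (le_add_of_nonneg_right (by positivity)))
    · filter_upwards [eventually_gt_atTop 0] with t ht
      calc t ^ 2 / 2 * log (1 + 1 / t ^ 4) ≤ t ^ 2 / 2 * (1 / t ^ 4) := by
            gcongr
            linarith [log_le_sub_one_of_pos (show 0 < 1 + 1 / t ^ 4 by positivity)]
        _ = 1 / (2 * t ^ 2) := by field_simp
  have harctan : Tendsto (fun t : ℝ => arctan (t ^ 2)) atTop (𝓝 (π / 2)) :=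
    (tendsto_arctan_atTop.mono_right nhdsWithin_le_nhds).comp
      (tendsto_pow_atTop two_ne_zero)
  refine (zero_add (π / 2) ▸ hlog.add harctan).congr' ?_
  filter_upwards [eventually_gt_atTop 0] with t ht
  rw [antiderivLog, log_one_add_inv_pow_four ht]
  ring

lemma mul_log_one_add_inv_pow_four_nonneg {t : ℝ} (ht : 0 < t) :
    0 ≤ t * log (1 + 1 / t ^ 4) :=
  mul_nonneg (le_of_lt ht) (log_nonneg (le_add_of_nonneg_right (by positivity)))

lemma integrableOn_mul_log_one_add_inv_pow_four :
    IntegrableOn (fun t : ℝ => t * log (1 + 1 / t ^ 4)) (Ioi 0) :=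
  integrableOn_Ioi_deriv_of_nonneg continuous_antiderivLog.continuousWithinAt
    (fun _ hx => hasDerivAt_antiderivLog hx) (fun _ hx => mul_log_one_add_inv_pow_four_nonneg hx)
    tendsto_antiderivLog_atTop

lemma integral_mul_log_one_add_inv_pow_four :
    ∫ t in Ioi (0 : ℝ), t * log (1 + 1 / t ^ 4) = π / 2 := by
  rw [integral_Ioi_of_hasDerivAt_of_nonneg continuous_antiderivLog.continuousWithinAt
    (fun _ hx => hasDerivAt_antiderivLog hx) (fun _ hx => mul_log_one_add_inv_pow_four_nonneg hx)
    tendsto_antiderivLog_atTop]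
  simp [antiderivLog]

lemma abs_log_one_add_sub_sum_le {z : ℝ} (h0 : 0 ≤ z) (h1 : z < 1) (n : ℕ) :
    |log (1 + z) - ∑ i ∈ Finset.range n, (-1) ^ i * z ^ (i + 1) / (i + 1)|
      ≤ z ^ (n + 1) / (1 - z) := by
  have h := abs_log_sub_add_sum_range_le (x := -z) (by rwa [abs_neg, abs_of_nonneg h0]) n
  rw [abs_neg, abs_of_nonneg h0, sub_neg_eq_add] at h
  convert h using 2
  rw [sub_eq_neg_add, ← Finset.sum_neg_distrib]
  congr 1
  refine Finset.sum_congr rfl fun i _ => ?_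
  ring

def coeff : ℕ → ℝ
  | 0 => 1
  | 1 => -12
  | 2 => 40
  | 3 => -50
  | 4 => 21
  | _ => 0

/-- `P (t / t₀)` is the paper's `r(t)`: `P σ = r (1 - σ)` with `r τ = 21τ⁴ - 34τ³ + 16τ² - 2τ`,
and the counterexample is the paper's with `ε = 1`. -/
def P (σ : ℝ) : ℝ := ∑ j ∈ Finset.range 5, coeff j * σ ^ j

lemma sum_coeff_mul (f : ℕ → ℝ) :
    ∑ j ∈ Finset.range 5, coeff j * f j = f 0 - 12 * f 1 + 40 * f 2 - 50 * f 3 + 21 * f 4 := by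
  simp only [Finset.sum_range_succ, Finset.sum_range_zero, coeff]
  ring

lemma P_eq (σ : ℝ) : P σ = 1 - 12 * σ + 40 * σ ^ 2 - 50 * σ ^ 3 + 21 * σ ^ 4 := by
  rw [P, sum_coeff_mul]
  ring

lemma P_one : P 1 = 0 := by norm_num [P_eq]

@[fun_prop]
lemma continuous_P : Continuous P := by
  unfold P; fun_prop

lemma abs_P_le_one {σ : ℝ} (h0 : 0 ≤ σ) (h1 : σ ≤ 1) : |P σ| ≤ 1 := by
  rw [P_eq, abs_le]
  constructor
  · nlinarith [sq_nonneg (σ - 1/4), sq_nonneg (σ^2 - σ/2), mul_nonneg h0 (sq_nonneg (1-σ)),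
      mul_nonneg (sub_nonneg.2 h1) (sq_nonneg σ), sq_nonneg (σ*(1-σ))]
  · nlinarith [mul_nonneg h0 (sq_nonneg (1-σ)), mul_nonneg (mul_nonneg h0 h0) (sq_nonneg (1-σ)),
      sq_nonneg (σ*(1-σ)), mul_nonneg h0 (sub_nonneg.2 h1), sq_nonneg σ]

lemma integral_P_mul (u : ℝ) {g : ℝ → ℝ} (hg : Continuous g) (a b : ℝ) :
    ∫ x in a..b, P (u * x) * g x
      = ∑ j ∈ Finset.range 5, coeff j * (u ^ j * ∫ x in a..b, x ^ j * g x) := by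
  simp_rw [P, Finset.sum_mul]
  rw [intervalIntegral.integral_finsetSum fun j _ =>
    (by fun_prop : Continuous _).intervalIntegrable _ _]
  refine Finset.sum_congr rfl fun j _ => ?_
  rw [← intervalIntegral.integral_const_mul, ← intervalIntegral.integral_const_mul]
  congr 1 with x
  ring

lemma integral_P_mul_kernel_one (u : ℝ) :
    ∫ x in 0..1, P (u * x) * (x * (x - 1 - log x)) = (1 - u) ^ 4 / 12 := by
  rw [integral_P_mul u continuous_mul_kernel, sum_coeff_mul]
  simp only [integral_pow_mul_kernel _ zero_le_one]
  norm_num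
  ring

lemma integral_P_mul_kernel_eq_zero {c : ℝ} (hc : 0 < c) :
    ∫ x in 0..c, P (c⁻¹ * x) * (x * (x - 1 - log x)) = 0 := by
  rw [integral_P_mul _ continuous_mul_kernel, sum_coeff_mul]
  simp only [integral_pow_mul_kernel _ hc.le]
  field_simp
  ring

lemma integral_P_mul_mul_log_eq_zero {c : ℝ} (hc : 0 < c) :
    ∫ x in 0..c, P (c⁻¹ * x) * (x * log x) = 0 := by
  rw [integral_P_mul _ continuous_mul_log, sum_coeff_mul]
  simp only [integral_pow_mul_mul_log _ hc.le]
  field_simp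
  ring

lemma integral_P_mul_pow (m : ℕ) {c : ℝ} (hc : c ≠ 0) :
    ∫ x in 0..c, P (c⁻¹ * x) * x ^ m
      = c ^ (m + 1) * ∑ j ∈ Finset.range 5, coeff j * ((m + j + 1 : ℝ))⁻¹ := by
  rw [integral_P_mul _ (continuous_pow m), Finset.mul_sum]
  refine Finset.sum_congr rfl fun j _ => ?_
  simp_rw [← pow_add, integral_pow]
  rw [inv_pow]
  field_simp
  push_cast
  ring

noncomputable def t₀ : ℝ := (3 / 5 : ℝ) ^ ((1 : ℝ) / 4)

lemma t₀_pos : 0 < t₀ := rpow_pos_of_pos (by norm_num) _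

lemma t₀_pow_four : t₀ ^ 4 = 3 / 5 := by
  rw [t₀, ← rpow_natCast, ← rpow_mul (by norm_num)]
  norm_num

noncomputable def q (t : ℝ) : ℝ := if t ≤ t₀ then 12 * t * (1 - P (t₀⁻¹ * t)) else 12 * t

lemma q_of_le {s : ℝ} (hs : s ≤ t₀) : q s = 12 * s * (1 - P (t₀⁻¹ * s)) := if_pos hs

lemma q_of_ge {s : ℝ} (hs : t₀ ≤ s) : q s = 12 * s := by
  rcases hs.eq_or_lt with rfl | h
  · simp [q, t₀_pos.ne', P_one]
  · exact if_neg (not_le.2 h)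

lemma continuous_q : Continuous q :=
  Continuous.if_le (by fun_prop) (by fun_prop) continuous_id
    continuous_const fun s hs => by simp [hs, t₀_pos.ne', P_one]

lemma q_nonneg {t : ℝ} (ht : 0 < t) : 0 ≤ q t := by
  rcases le_total t t₀ with h | h
  · have hσ := abs_P_le_one (mul_pos (inv_pos.2 t₀_pos) ht).le
      (by rw [inv_mul_le_one₀ t₀_pos]; exact h)
    rw [q_of_le h]
    nlinarith [(abs_le.1 hσ).2]
  · rw [q_of_ge h]; positivity

lemma integral_mul_kernel : ∫ x in (0 : ℝ)..1, x * (x - 1 - log x) = 1 / 12 := by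
  simpa using (integral_pow_mul_kernel 0 zero_le_one).trans (by norm_num)

lemma integral_kernel_mul_one_sub_P (t u a b : ℝ) :
    ∫ x in a..b, (x - 1 - log x) * (12 * (t * x) * (1 - P (u * x)))
      = 12 * t * (∫ x in a..b, x * (x - 1 - log x))
        - 12 * t * ∫ x in a..b, P (u * x) * (x * (x - 1 - log x)) := by
  have hP : Continuous fun x => P (u * x) * (x * (x - 1 - log x)) :=
    (by fun_prop : Continuous fun x => P (u * x)).mul continuous_mul_kernel
  rw [← intervalIntegral.integral_const_mul, ← intervalIntegral.integral_const_mul,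
    ← integral_sub ((continuous_mul_kernel.intervalIntegrable _ _).const_mul _)
      ((hP.intervalIntegrable _ _).const_mul _)]
  congr 1 with x
  ring

lemma integral_kernel_mul_q_le {t : ℝ} (ht : 0 < t) :
    ∫ x in (0 : ℝ)..1, (x - 1 - log x) * q (t * x) ≤ t := by
  rcases le_or_gt t t₀ with h | h
  · have hq : EqOn (fun x => (x - 1 - log x) * q (t * x))
        (fun x => (x - 1 - log x) * (12 * (t * x) * (1 - P ((t₀⁻¹ * t) * x)))) (uIcc 0 1) := by
      intro x hx
      rw [uIcc_of_le zero_le_one] at hx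
      dsimp only
      rw [q_of_le (by nlinarith [hx.1, hx.2]), mul_assoc t₀⁻¹]
    rw [integral_congr hq, integral_kernel_mul_one_sub_P, integral_mul_kernel,
      integral_P_mul_kernel_one]
    nlinarith [pow_nonneg (sq_nonneg (1 - t₀⁻¹ * t)) 2]
  · set c := t₀ / t with hc
    have hc0 : 0 < c := div_pos t₀_pos ht
    have hc1 : c < 1 := (div_lt_one ht).2 h
    have hint : ∀ a b, IntervalIntegrable (fun x => (x - 1 - log x) * q (t * x)) volume a b :=
      fun a b => (((intervalIntegrable_id.sub intervalIntegrable_const).sub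
        intervalIntegrable_log').mul_continuousOn
          (continuous_q.comp (continuous_const_mul t)).continuousOn)
    have hq₀ : EqOn (fun x => (x - 1 - log x) * q (t * x))
        (fun x => (x - 1 - log x) * (12 * (t * x) * (1 - P (c⁻¹ * x)))) (uIcc 0 c) := by
      intro x hx
      rw [uIcc_of_le hc0.le] at hx
      have htx : t * x ≤ t₀ := by
        calc t * x ≤ t * c := by gcongr; exact hx.2
          _ = t₀ := by rw [hc]; field_simp
      dsimp only
      rw [q_of_le htx, hc]
      field_simp
    have hq₁ : EqOn (fun x => (x - 1 - log x) * q (t * x))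
        (fun x => 12 * t * (x * (x - 1 - log x))) (uIcc c 1) := by
      intro x hx
      rw [uIcc_of_le hc1.le] at hx
      have htx : t₀ ≤ t * x := by
        calc t₀ = t * c := by rw [hc]; field_simp
          _ ≤ t * x := by gcongr; exact hx.1
      dsimp only
      rw [q_of_ge htx]
      ring
    rw [← integral_add_adjacent_intervals (hint 0 c) (hint c 1), integral_congr hq₀,
      integral_congr hq₁, integral_kernel_mul_one_sub_P, integral_P_mul_kernel_eq_zero hc0,
      intervalIntegral.integral_const_mul, mul_zero, sub_zero, ← mul_add,
      integral_add_adjacent_intervals (continuous_mul_kernel.intervalIntegrable _ _)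
        (continuous_mul_kernel.intervalIntegrable _ _), integral_mul_kernel]
    linarith

lemma P_mul_mul_log_one_add_pow_four_le {t : ℝ} (ht : t ∈ Icc 0 t₀) :
    P (t₀⁻¹ * t) * (t * log (1 + t ^ 4))
      ≤ ∑ i ∈ Finset.range 7, (-1) ^ i / (i + 1) * (P (t₀⁻¹ * t) * t ^ (4 * i + 5))
        + 5 / 2 * t ^ 33 := by
  obtain ⟨ht0, ht1⟩ := ht
  have hz : t ^ 4 ≤ 3 / 5 := t₀_pow_four ▸ pow_le_pow_left₀ ht0 ht1 4
  have hP := abs_P_le_one (mul_nonneg (inv_nonneg.2 t₀_pos.le) ht0)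
    (by rw [inv_mul_le_one₀ t₀_pos]; exact ht1)
  have hlog := abs_log_one_add_sub_sum_le (pow_nonneg ht0 4) (by linarith) 7
  have hrem : (t ^ 4) ^ (7 + 1) / (1 - t ^ 4) ≤ 5 / 2 * t ^ 32 := by
    rw [div_le_iff₀ (by linarith)]
    nlinarith [pow_nonneg ht0 32]
  have hsum : ∑ i ∈ Finset.range 7, (-1) ^ i / (i + 1) * (P (t₀⁻¹ * t) * t ^ (4 * i + 5))
      = P (t₀⁻¹ * t) * (t * ∑ i ∈ Finset.range 7, (-1) ^ i * (t ^ 4) ^ (i + 1) / (i + 1)) := by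
    rw [Finset.mul_sum, Finset.mul_sum]
    refine Finset.sum_congr rfl fun i _ => ?_
    ring
  rw [hsum]
  set S := ∑ i ∈ Finset.range 7, (-1) ^ i * (t ^ 4) ^ (i + 1) / ((i : ℝ) + 1)
  calc P (t₀⁻¹ * t) * (t * log (1 + t ^ 4))
      = P (t₀⁻¹ * t) * (t * S) + t * (P (t₀⁻¹ * t) * (log (1 + t ^ 4) - S)) := by ring
    _ ≤ P (t₀⁻¹ * t) * (t * S) + t * (5 / 2 * t ^ 32) := by
      refine add_le_add_right (mul_le_mul_of_nonneg_left ?_ ht0) _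
      calc P (t₀⁻¹ * t) * (log (1 + t ^ 4) - S)
          ≤ |P (t₀⁻¹ * t)| * |log (1 + t ^ 4) - S| := by rw [← abs_mul]; exact le_abs_self _
        _ ≤ 1 * (5 / 2 * t ^ 32) := by gcongr; exact hlog.trans hrem
        _ = 5 / 2 * t ^ 32 := one_mul _
    _ = P (t₀⁻¹ * t) * (t * S) + 5 / 2 * t ^ 33 := by ring

lemma integral_P_mul_mul_log_one_add_pow_four_neg :
    ∫ t in 0..t₀, P (t₀⁻¹ * t) * (t * log (1 + t ^ 4)) < 0 := by
  have hPt : ∀ m : ℕ, Continuous fun t => P (t₀⁻¹ * t) * t ^ m := fun m => by fun_prop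
  have hsum : ∀ a b, IntervalIntegrable (fun t => ∑ i ∈ Finset.range 7,
      (-1) ^ i / ((i : ℝ) + 1) * (P (t₀⁻¹ * t) * t ^ (4 * i + 5))) volume a b :=
    fun a b => (by fun_prop : Continuous _).intervalIntegrable a b
  refine (integral_mono_on t₀_pos.le ((by fun_prop : Continuous _).intervalIntegrable _ _)
    ((hsum _ _).add ((intervalIntegrable_pow 33).const_mul _))
    fun t ht => P_mul_mul_log_one_add_pow_four_le ht).trans_lt ?_
  rw [intervalIntegral.integral_add (hsum _ _) ((intervalIntegrable_pow 33).const_mul _),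
    intervalIntegral.integral_finsetSum fun i _ => ((hPt _).intervalIntegrable _ _).const_mul _]
  simp_rw [intervalIntegral.integral_const_mul, integral_P_mul_pow _ t₀_pos.ne', integral_pow]
  have hpow : ∀ n : ℕ, t₀ ^ (4 * n + 2) = t₀ ^ 2 * (3 / 5) ^ n := fun n => by
    rw [← t₀_pow_four]; ring
  simp_rw [show ∀ n : ℕ, 4 * n + 5 + 1 = 4 * (n + 1) + 2 by omega, hpow,
    show 33 + 1 = 4 * 8 + 2 by rfl, hpow]
  have ht₀ : 0 < t₀ ^ 2 := pow_pos t₀_pos 2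
  norm_num [Finset.sum_range_succ, coeff]
  linarith

lemma six_pi_lt_integral_q_mul_log :
    6 * π < ∫ t in Ioi (0 : ℝ), q t * log (1 + 1 / t ^ 4) := by
  have h₁ : Continuous fun t => P (t₀⁻¹ * t) * (t * log (1 + t ^ 4)) := by fun_prop
  have h₂ : Continuous fun t => P (t₀⁻¹ * t) * (t * log t) :=
    (by fun_prop : Continuous fun t => P (t₀⁻¹ * t)).mul continuous_mul_log
  set g : ℝ → ℝ := fun t =>
    12 * (P (t₀⁻¹ * t) * (t * log (1 + t ^ 4))) - 48 * (P (t₀⁻¹ * t) * (t * log t))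
  have heq : EqOn (fun t => q t * log (1 + 1 / t ^ 4))
      (fun t => 12 * (t * log (1 + 1 / t ^ 4)) - (Ioc 0 t₀).indicator g t) (Ioi 0) := by
    intro t ht
    rcases le_or_gt t t₀ with h | h
    · simp only [indicator_of_mem (show t ∈ Ioc 0 t₀ from ⟨ht, h⟩), g, q_of_le h,
        log_one_add_inv_pow_four ht]
      ring
    · simp only [indicator_of_notMem (fun h' : t ∈ Ioc 0 t₀ => h.not_ge h'.2), q_of_ge h.le]
      ring
  have hg : IntegrableOn g (Ioc 0 t₀) :=
    ((h₁.const_mul 12).sub (h₂.const_mul 48)).integrableOn_Icc.mono_set Ioc_subset_Icc_self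
  rw [setIntegral_congr_fun measurableSet_Ioi heq, integral_sub
      (integrableOn_mul_log_one_add_inv_pow_four.const_mul 12)
      (hg.integrable_indicator measurableSet_Ioc).integrableOn,
    MeasureTheory.integral_const_mul, integral_mul_log_one_add_inv_pow_four,
    setIntegral_indicator measurableSet_Ioc, inter_eq_self_of_subset_right Ioc_subset_Ioi_self,
    ← integral_of_le t₀_pos.le, integral_sub ((h₁.intervalIntegrable _ _).const_mul _)
      ((h₂.intervalIntegrable _ _).const_mul _),
    intervalIntegral.integral_const_mul, intervalIntegral.integral_const_mul,
    integral_P_mul_mul_log_eq_zero t₀_pos]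
  linarith [integral_P_mul_mul_log_one_add_pow_four_neg]

end Khabibullin

theorem khabibullin_counterexample :
    ∃ q : ℝ → ℝ, ContinuousOn q (Ioi 0) ∧ (∀ t > (0:ℝ), 0 ≤ q t) ∧
      (∀ t > (0:ℝ),
        (∫ x in (0:ℝ)..1, (∫ y in x..1, (1 - y) / y) * q (t * x)) ≤ t) ∧
      6 * π < ∫ t in Ioi (0:ℝ), q t * Real.log (1 + 1 / t ^ 4) := by
  refine ⟨Khabibullin.q, Khabibullin.continuous_q.continuousOn,
    fun t ht => Khabibullin.q_nonneg ht, fun t ht => ?_, Khabibullin.six_pi_lt_integral_q_mul_log⟩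
  rw [intervalIntegral.integral_congr_ae (Filter.Eventually.of_forall fun x hx => by
    rw [Khabibullin.integral_one_sub_div_self (by simpa using hx.1)])]
  exact Khabibullin.integral_kernel_mul_q_le ht
end
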